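/- arXiv:2402.01451 — 6 statements merged into one kernel-verified Lean document; each statement's English description precedes it below -/
import Mathlib

section
/- Let H and M be real Hilbert spaces, a : H × H → ℝ a bounded bilinear form with constant ‖a‖ that is coercive with constant α > 0, b : H × M → ℝ a bounded bilinear form satisfying the inf-sup condition with constant β > 0, and ã : H × H × H → ℝ a trilinear form bounded with constant C_ã. Fix U ∈ H, G ∈ M' and R₀ > 0 such that (1/α)·[C_ã R₀² + ‖a‖·‖U‖ + ((α + ‖a‖)/β)·‖G‖_{M'}] + ‖U‖ ≤ R₀. Then for every w ∈ H with ‖w‖ ≤ R₀, the unique pair (u₀, p) ∈ H × M satisfying a(u₀, v) + b(v, p) = −ã(w, w, v) − a(U, v) for all v ∈ H and b(u₀, m) = G(m) for all m ∈ M satisfies ‖u₀ + U‖ ≤ R₀. -/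
set_option maxHeartbeats 1600000 in
/-- under a smallness condition on the data, the Stokes-linearisation
solution map `w ↦ u₀ + U` maps the closed ball of radius `R₀` into itself. -/
theorem stokes_linearisation_maps_ball_into_ball
    {H M : Type*}
    [NormedAddCommGroup H] [InnerProductSpace ℝ H] [CompleteSpace H]
    [NormedAddCommGroup M] [InnerProductSpace ℝ M] [CompleteSpace M]
    (a : H →L[ℝ] H →L[ℝ] ℝ)
    (α : ℝ) (hα : 0 < α) (hcoer : ∀ v : H, α * ‖v‖ ^ 2 ≤ a v v)
    (b : H →L[ℝ] M →L[ℝ] ℝ)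
    (β : ℝ) (hβ : 0 < β)
    (hinfsup : ∀ m : M, β * ‖m‖ ≤ ⨆ v : {v : H // v ≠ 0}, b v.1 m / ‖v.1‖)
    (ta : H →L[ℝ] H →L[ℝ] H →L[ℝ] ℝ)
    (Cta : ℝ) (hta : ∀ w u v : H, |ta w u v| ≤ Cta * ‖w‖ * ‖u‖ * ‖v‖)
    (U : H) (G : M →L[ℝ] ℝ) (R₀ : ℝ) (hR₀ : 0 < R₀)
    (hsmall :
      (1 / α) * (Cta * R₀ ^ 2 + ‖a‖ * ‖U‖ + ((α + ‖a‖) / β) * ‖G‖) + ‖U‖ ≤ R₀) :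
    ∀ w : H, ‖w‖ ≤ R₀ → ∀ (u₀ : H) (p : M),
      (∀ v : H, a u₀ v + b v p = -(ta w w v) - a U v) →
      (∀ m : M, b u₀ m = G m) →
      ‖u₀ + U‖ ≤ R₀ := by
  intro w hw u₀ p heq hbm
  rcases subsingleton_or_nontrivial H with hs | hnt
  · have h0 : u₀ + U = 0 := Subsingleton.elim _ _
    rw [h0, norm_zero]; exact hR₀.le
  obtain ⟨v₀, hv₀⟩ := exists_ne (0 : H)
  haveI : Nonempty {v : H // v ≠ 0} := ⟨⟨v₀, hv₀⟩⟩
  have hv₀pos : 0 < ‖v₀‖ := norm_pos_iff.mpr hv₀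
  have hCta : 0 ≤ Cta := by
    have h1 := hta v₀ v₀ v₀
    have h2 := abs_nonneg (ta v₀ v₀ v₀)
    nlinarith [mul_pos (mul_pos hv₀pos hv₀pos) hv₀pos]
  set A := ‖a‖ with hA
  have hA0 : 0 ≤ A := norm_nonneg a
  have habs : ∀ u v : H, |a u v| ≤ A * ‖u‖ * ‖v‖ := by
    intro u v
    calc |a u v| = ‖a u v‖ := (Real.norm_eq_abs _).symm
      _ ≤ ‖a u‖ * ‖v‖ := (a u).le_opNorm v
      _ ≤ A * ‖u‖ * ‖v‖ := by
          have := a.le_opNorm u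
          exact mul_le_mul_of_nonneg_right this (norm_nonneg v)
  set K := Cta * R₀ ^ 2 + A * ‖U‖ with hK
  have hK0 : 0 ≤ K := by positivity
  set t := ‖u₀‖ with ht
  set g := ‖G‖ with hg
  have hg0 : 0 ≤ g := norm_nonneg G
  have ht0 : 0 ≤ t := norm_nonneg u₀
  have hww : Cta * ‖w‖ * ‖w‖ ≤ Cta * R₀ ^ 2 := by
    have h := mul_le_mul hw hw (norm_nonneg w) hR₀.le
    have h' := mul_le_mul_of_nonneg_left h hCta
    nlinarith [h']
  -- Step 1: bound on ‖p‖ from the inf-sup condition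
  have hp : β * ‖p‖ ≤ K + A * t := by
    refine le_trans (hinfsup p) (ciSup_le ?_)
    rintro ⟨v, hv⟩
    have hvpos : 0 < ‖v‖ := norm_pos_iff.mpr hv
    rw [div_le_iff₀ hvpos]
    have hbvp : b v p = -(ta w w v) - a U v - a u₀ v := by
      have := heq v; linarith
    have h1 := hta w w v
    have h2 := habs U v
    have h3 := habs u₀ v
    have e1 : b v p ≤ Cta * ‖w‖ * ‖w‖ * ‖v‖ + A * ‖U‖ * ‖v‖ + A * t * ‖v‖ := by
      rw [hbvp]
      linarith [neg_le_abs (ta w w v), neg_le_abs (a U v), neg_le_abs (a u₀ v)]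
    have e2 : Cta * ‖w‖ * ‖w‖ * ‖v‖ ≤ Cta * R₀ ^ 2 * ‖v‖ :=
      mul_le_mul_of_nonneg_right hww (norm_nonneg v)
    calc b v p ≤ Cta * R₀ ^ 2 * ‖v‖ + A * ‖U‖ * ‖v‖ + A * t * ‖v‖ := by linarith
      _ = (K + A * t) * ‖v‖ := by rw [hK]; ring
  -- Step 2: coercivity estimate
  have hcoe : α * t ^ 2 ≤ K * t + g * ‖p‖ := by
    have h0 : a u₀ u₀ = -(ta w w u₀) - a U u₀ - G p := by
      have h1 := heq u₀
      have h2 := hbm p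
      linarith
    have h1 := hcoer u₀
    have h2 := hta w w u₀
    have h3 := habs U u₀
    have h4 : |G p| ≤ g * ‖p‖ := by
      calc |G p| = ‖G p‖ := (Real.norm_eq_abs _).symm
        _ ≤ g * ‖p‖ := G.le_opNorm p
    have h5 : a u₀ u₀ ≤ Cta * ‖w‖ * ‖w‖ * t + A * ‖U‖ * t + g * ‖p‖ := by
      rw [h0]
      linarith [neg_le_abs (ta w w u₀), neg_le_abs (a U u₀), neg_le_abs (G p)]
    have h6 : Cta * ‖w‖ * ‖w‖ * t ≤ Cta * R₀ ^ 2 * t :=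
      mul_le_mul_of_nonneg_right hww ht0
    have h7 : Cta * R₀ ^ 2 * t + A * ‖U‖ * t = K * t := by rw [hK]; ring
    linarith
  -- Step 3: nonlinear arithmetic to conclude t ≤ T
  have hT0 : α * β * t ≤ β * K + (α + A) * g := by
    by_contra hcon
    push_neg at hcon
    have h2 : g * (β * ‖p‖) ≤ g * (K + A * t) := mul_le_mul_of_nonneg_left hp hg0
    have h3 : β * (α * t ^ 2) ≤ β * (K * t + g * ‖p‖) := mul_le_mul_of_nonneg_left hcoe hβ.le
    have h4 : 0 ≤ t * (α * β * t - β * K - (α + A) * g) :=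
      mul_nonneg ht0 (by linarith)
    have i1 : α * β * t ^ 2 ≤ β * K * t + g * K + g * A * t := by nlinarith [h2, h3]
    have i3 : α * g * t ≤ g * K := by nlinarith [h4, i1]
    have i4 : g * (β * K + (α + A) * g) ≤ g * (α * β * t) :=
      mul_le_mul_of_nonneg_left hcon.le hg0
    have i5 : β * (α * g * t) ≤ β * (g * K) := mul_le_mul_of_nonneg_left i3 hβ.le
    have i6 : g * g ≤ 0 := by nlinarith [i4, i5]
    have hgz : g = 0 := mul_self_eq_zero.mp (le_antisymm i6 (mul_self_nonneg g))
    rw [hgz] at hcon i1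
    have htpos : 0 < t := by
      rcases lt_or_eq_of_le ht0 with h | h
      · exact h
      · exfalso
        rw [← h] at hcon
        nlinarith [mul_nonneg hβ.le hK0]
    have := mul_lt_mul_of_pos_right hcon htpos
    nlinarith [this, i1]
  have hT : t ≤ (1 / α) * (K + ((α + A) / β) * g) := by
    have h5 : t ≤ (β * K + (α + A) * g) / (α * β) :=
      (le_div_iff₀ (mul_pos hα hβ)).2 (by linarith)
    have h6 : (β * K + (α + A) * g) / (α * β) = (1 / α) * (K + ((α + A) / β) * g) := by
      field_simp
    linarith [h6 ▸ h5]
  calc ‖u₀ + U‖ ≤ t + ‖U‖ := norm_add_le _ _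
    _ ≤ (1 / α) * (K + ((α + A) / β) * g) + ‖U‖ := by linarith
    _ ≤ R₀ := hsmall
end

section
/- Let H and M be real Hilbert spaces, a : H × H → ℝ a bounded bilinear form coercive with constant α > 0, b : H × M → ℝ a bounded bilinear form, and ã : H × H × H → ℝ a trilinear form bounded with constant C_ã. Fix U ∈ H and G ∈ M'. For i = 1, 2, let wᵢ ∈ H and let (u₀ᵢ, pᵢ) ∈ H × M satisfy a(u₀ᵢ, v) + b(v, pᵢ) = −ã(wᵢ, wᵢ, v) − a(U, v) for all v ∈ H and b(u₀ᵢ, m) = G(m) for all m ∈ M. Then ‖u₀₁ − u₀₂‖ ≤ (C_ã/α)·(‖w₁‖ + ‖w₂‖)·‖w₁ − w₂‖. -/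
set_option maxHeartbeats 1000000


/-- Lipschitz continuity of the Stokes-linearisation solution map with
respect to the advecting velocity. -/
theorem stokes_linearisation_lipschitz
    {H M : Type*}
    [NormedAddCommGroup H] [InnerProductSpace ℝ H] [CompleteSpace H]
    [NormedAddCommGroup M] [InnerProductSpace ℝ M] [CompleteSpace M]
    (a : H →L[ℝ] H →L[ℝ] ℝ)
    (α : ℝ) (hα : 0 < α) (hcoer : ∀ v : H, α * ‖v‖ ^ 2 ≤ a v v)
    (b : H →L[ℝ] M →L[ℝ] ℝ)
    (ta : H →L[ℝ] H →L[ℝ] H →L[ℝ] ℝ)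
    (Cta : ℝ) (hta : ∀ w u v : H, |ta w u v| ≤ Cta * ‖w‖ * ‖u‖ * ‖v‖)
    (U : H) (G : M →L[ℝ] ℝ)
    (w₁ w₂ u₀₁ u₀₂ : H) (p₁ p₂ : M)
    (h1a : ∀ v : H, a u₀₁ v + b v p₁ = -(ta w₁ w₁ v) - a U v)
    (h1b : ∀ m : M, b u₀₁ m = G m)
    (h2a : ∀ v : H, a u₀₂ v + b v p₂ = -(ta w₂ w₂ v) - a U v)
    (h2b : ∀ m : M, b u₀₂ m = G m) :
    ‖u₀₁ - u₀₂‖ ≤ (Cta / α) * (‖w₁‖ + ‖w₂‖) * ‖w₁ - w₂‖ := by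
  obtain ⟨e, he⟩ : ∃ e, e = u₀₁ - u₀₂ := ⟨_, rfl⟩
  rw [← he]
  have hb1 : b e p₁ = 0 := by
    simp [he, map_sub, ContinuousLinearMap.sub_apply, h1b, h2b]
  have hb2 : b e p₂ = 0 := by
    simp [he, map_sub, ContinuousLinearMap.sub_apply, h1b, h2b]
  have h1 := h1a e
  have h2 := h2a e
  have hsub : a e e = a u₀₁ e - a u₀₂ e := by
    simp only [he, map_sub, ContinuousLinearMap.sub_apply]
    ring
  have hae : a e e = ta w₂ w₂ e - ta w₁ w₁ e := by
    rw [hsub]; linarith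
  have hsplit : ta w₂ w₂ e - ta w₁ w₁ e
      = -(ta (w₁ - w₂) w₁ e) - ta w₂ (w₁ - w₂) e := by
    simp only [map_sub, ContinuousLinearMap.sub_apply]
    ring
  have habs1 := hta (w₁ - w₂) w₁ e
  have habs2 := hta w₂ (w₁ - w₂) e
  have key : α * ‖e‖ ^ 2 ≤
      Cta * (‖w₁‖ + ‖w₂‖) * ‖w₁ - w₂‖ * ‖e‖ := by
    have h3 := hcoer e
    have h4 : -(ta (w₁ - w₂) w₁ e) ≤ |ta (w₁ - w₂) w₁ e| := neg_le_abs _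
    have h5 : -(ta w₂ (w₁ - w₂) e) ≤ |ta w₂ (w₁ - w₂) e| := neg_le_abs _
    nlinarith [hae, hsplit]
  by_cases hw : w₁ = w₂
  · have h0 : ‖e‖ ^ 2 ≤ 0 := by
      have : α * ‖e‖ ^ 2 ≤ 0 := by simpa [hw] using key
      nlinarith
    have : ‖e‖ = 0 := by nlinarith [norm_nonneg e, sq_nonneg ‖e‖]
    simp [this, hw]
  · have hCta : 0 ≤ Cta := by
      have hd : 0 < ‖w₁ - w₂‖ := by
        simpa [sub_eq_zero] using norm_pos_iff.2 (sub_ne_zero.2 hw)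
      have := (hta (w₁ - w₂) (w₁ - w₂) (w₁ - w₂))
      nlinarith [abs_nonneg (ta (w₁ - w₂) (w₁ - w₂) (w₁ - w₂)), mul_pos (mul_pos hd hd) hd]
    rcases eq_or_lt_of_le (norm_nonneg e) with h0 | h0
    · rw [← h0]
      positivity
    · have hle : α * ‖e‖ ≤ Cta * (‖w₁‖ + ‖w₂‖) * ‖w₁ - w₂‖ := by
        have := key
        nlinarith
      rw [div_mul_eq_mul_div, div_mul_eq_mul_div, le_div_iff₀ hα]
      linarith [hle]
end

section
/- Let H and M be real Hilbert spaces, a : H × H → ℝ a bounded bilinear form with constant ‖a‖ that is coercive with constant α > 0, b : H × M → ℝ a bounded bilinear form satisfying the inf-sup condition with constant β > 0, and ã : H × H × H → ℝ a trilinear form bounded with constant C_ã. Let R₀ > 0 with 2 C_ã R₀ < α. For i = 1, 2, let Gᵢ ∈ M' and let (uᵢ, pᵢ) ∈ H × M with ‖uᵢ‖ ≤ R₀ satisfy a(uᵢ, v) + ã(uᵢ, uᵢ, v) + b(v, pᵢ) = 0 for all v ∈ H and b(uᵢ, m) = Gᵢ(m) for all m ∈ M. Then ‖u₁ − u₂‖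 ≤ ((α + ‖a‖)/(β(α − 2 C_ã R₀)))·‖G₁ − G₂‖_{M'}. -/
set_option maxHeartbeats 2000000


/-- Lipschitz continuity of the Navier–Stokes solution operator with
respect to the membrane datum `G`. -/
theorem navier_stokes_solution_lipschitz_in_datum
    {H M : Type*}
    [NormedAddCommGroup H] [InnerProductSpace ℝ H] [CompleteSpace H]
    [NormedAddCommGroup M] [InnerProductSpace ℝ M] [CompleteSpace M]
    (a : H →L[ℝ] H →L[ℝ] ℝ)
    (α : ℝ) (hα : 0 < α) (hcoer : ∀ v : H, α * ‖v‖ ^ 2 ≤ a v v)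
    (b : H →L[ℝ] M →L[ℝ] ℝ)
    (β : ℝ) (hβ : 0 < β)
    (hinfsup : ∀ m : M, β * ‖m‖ ≤ ⨆ v : {v : H // v ≠ 0}, b v.1 m / ‖v.1‖)
    (ta : H →L[ℝ] H →L[ℝ] H →L[ℝ] ℝ)
    (Cta : ℝ) (hta : ∀ w u v : H, |ta w u v| ≤ Cta * ‖w‖ * ‖u‖ * ‖v‖)
    (R₀ : ℝ) (hR₀ : 0 < R₀) (hcontr : 2 * Cta * R₀ < α)
    (G₁ G₂ : M →L[ℝ] ℝ)
    (u₁ u₂ : H) (p₁ p₂ : M)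
    (hu₁ : ‖u₁‖ ≤ R₀) (hu₂ : ‖u₂‖ ≤ R₀)
    (h1a : ∀ v : H, a u₁ v + ta u₁ u₁ v + b v p₁ = 0)
    (h1b : ∀ m : M, b u₁ m = G₁ m)
    (h2a : ∀ v : H, a u₂ v + ta u₂ u₂ v + b v p₂ = 0)
    (h2b : ∀ m : M, b u₂ m = G₂ m) :
    ‖u₁ - u₂‖ ≤ ((α + ‖a‖) / (β * (α - 2 * Cta * R₀))) * ‖G₁ - G₂‖ := by
  have hden : 0 < β * (α - 2 * Cta * R₀) := mul_pos hβ (by linarith)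
  by_cases hne : ∃ v₀ : H, v₀ ≠ 0
  · obtain ⟨v₀, hv₀⟩ := hne
    have hv₀n : 0 < ‖v₀‖ := norm_pos_iff.mpr hv₀
    have hCta : 0 ≤ Cta := by
      have h := (abs_nonneg (ta v₀ v₀ v₀)).trans (hta v₀ v₀ v₀)
      by_contra hc
      push_neg at hc
      nlinarith [mul_pos (mul_pos hv₀n hv₀n) hv₀n]
    set w := u₁ - u₂ with hw
    set q := p₁ - p₂ with hq
    have hD0 : 0 ≤ ‖G₁ - G₂‖ := norm_nonneg _
    have hbwq : ∀ v : H, b v q = -(a u₁ v - a u₂ v) - (ta u₁ u₁ v - ta u₂ u₂ v) := by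
      intro v
      have e1 := h1a v
      have e2 := h2a v
      have : b v q = b v p₁ - b v p₂ := by rw [hq, map_sub]
      linarith
    have haeq : ∀ v : H, a u₁ v - a u₂ v = a w v := by
      intro v; rw [hw, map_sub]; rfl
    have htaeq : ∀ v : H, ta u₁ u₁ v - ta u₂ u₂ v = ta w u₁ v + ta u₂ w v := by
      intro v
      rw [hw, map_sub, map_sub]
      simp only [ContinuousLinearMap.sub_apply]
      ring
    have hKest : ∀ v : H, |b v q| ≤ (‖a‖ + 2 * Cta * R₀) * ‖w‖ * ‖v‖ := by
      intro v
      rw [hbwq v, haeq v, htaeq v]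
      have h1 : |a w v| ≤ ‖a‖ * ‖w‖ * ‖v‖ := by
        have := a.le_opNorm₂ w v
        rwa [Real.norm_eq_abs] at this
      have h2 := hta w u₁ v
      have h3 := hta u₂ w v
      have habs : |(-(a w v) - (ta w u₁ v + ta u₂ w v))|
          ≤ |a w v| + |ta w u₁ v| + |ta u₂ w v| := by
        have e : -(a w v) - (ta w u₁ v + ta u₂ w v)
            = -((a w v) + (ta w u₁ v + ta u₂ w v)) := by ring
        rw [e, abs_neg]
        calc |(a w v) + (ta w u₁ v + ta u₂ w v)|
            ≤ |a w v| + |ta w u₁ v + ta u₂ w v| := abs_add_le _ _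
          _ ≤ |a w v| + (|ta w u₁ v| + |ta u₂ w v|) := by
              gcongr; exact abs_add_le _ _
          _ = |a w v| + |ta w u₁ v| + |ta u₂ w v| := by ring
      have hw0 : 0 ≤ ‖w‖ := norm_nonneg _
      have hv0 : 0 ≤ ‖v‖ := norm_nonneg _
      nlinarith [mul_nonneg (mul_nonneg hCta hw0) hv0, hu₁, hu₂,
        norm_nonneg u₁, norm_nonneg u₂]
    have hpress : β * ‖q‖ ≤ (‖a‖ + 2 * Cta * R₀) * ‖w‖ := by
      refine (hinfsup q).trans (Real.iSup_le ?_ ?_)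
      · rintro ⟨v, hv⟩
        have hvp : 0 < ‖v‖ := norm_pos_iff.mpr hv
        rw [div_le_iff₀ hvp]
        exact (le_abs_self _).trans (hKest v)
      · have : 0 ≤ ‖a‖ + 2 * Cta * R₀ := by
          nlinarith [norm_nonneg a, mul_nonneg hCta hR₀.le]
        exact mul_nonneg this (norm_nonneg _)
    have hbG : b w q = (G₁ - G₂) q := by
      rw [hw, hq, map_sub]
      simp only [ContinuousLinearMap.sub_apply, h1b, h2b, map_sub]
    have hGq : |b w q| ≤ ‖G₁ - G₂‖ * ‖q‖ := by
      rw [hbG]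
      have := (G₁ - G₂).le_opNorm q
      rwa [Real.norm_eq_abs] at this
    have hw0 : (0:ℝ) ≤ ‖w‖ := norm_nonneg _
    have hX : |ta w u₁ w| ≤ Cta * R₀ * ‖w‖ ^ 2 := by
      refine (hta w u₁ w).trans ?_
      nlinarith [mul_nonneg (mul_nonneg hCta hw0) hw0, hu₁, norm_nonneg u₁]
    have hY : |ta u₂ w w| ≤ Cta * R₀ * ‖w‖ ^ 2 := by
      refine (hta u₂ w w).trans ?_
      nlinarith [mul_nonneg (mul_nonneg hCta hw0) hw0, hu₂, norm_nonneg u₂]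
    have henergy : (α - 2 * Cta * R₀) * ‖w‖ ^ 2 ≤ ‖G₁ - G₂‖ * ‖q‖ := by
      have hc := hcoer w
      have haw : a w w = -(ta w u₁ w + ta u₂ w w) - b w q := by
        have h := hbwq w
        rw [haeq w, htaeq w] at h
        linarith
      have hstep : a w w ≤ |ta w u₁ w| + |ta u₂ w w| + |b w q| := by
        rw [haw]
        linarith [neg_abs_le (ta w u₁ w), neg_abs_le (ta u₂ w w), neg_abs_le (b w q)]
      linarith [hGq]
    rcases eq_or_lt_of_le (norm_nonneg w) with h0 | h0
    · rw [← h0]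
      apply mul_nonneg (div_nonneg _ hden.le) hD0
      nlinarith [norm_nonneg a]
    · have key : β * ((α - 2 * Cta * R₀) * ‖w‖ ^ 2) ≤ ‖G₁ - G₂‖ * ((‖a‖ + 2 * Cta * R₀) * ‖w‖) := by
        calc β * ((α - 2 * Cta * R₀) * ‖w‖ ^ 2) ≤ β * (‖G₁ - G₂‖ * ‖q‖) :=
              mul_le_mul_of_nonneg_left henergy hβ.le
          _ = ‖G₁ - G₂‖ * (β * ‖q‖) := by ring
          _ ≤ ‖G₁ - G₂‖ * ((‖a‖ + 2 * Cta * R₀) * ‖w‖) :=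
              mul_le_mul_of_nonneg_left hpress hD0
      rw [div_mul_eq_mul_div, le_div_iff₀ hden]
      nlinarith [key, mul_nonneg hD0 h0.le, h0, hcontr]
  · push_neg at hne
    have hz : u₁ - u₂ = 0 := hne _
    rw [hz, norm_zero]
    apply mul_nonneg (div_nonneg _ hden.le) (norm_nonneg _)
    nlinarith [norm_nonneg a]
end

section
/- Let H and Z be real Hilbert spaces, c : Z × Z → ℝ a bounded bilinear form coercive with constant γ > 0, and c̃ : H × Z × Z → ℝ a trilinear form bounded with constant C_c̃. Let F ∈ Z', let w₁, w₂ ∈ H, and let θ₁, θ₂ ∈ Z satisfy c(θᵢ, τ) + c̃(wᵢ; θᵢ, τ) = F(τ) for all τ ∈ Z (i = 1, 2). If c̃(w₂; τ, τ) ≥ 0 for all τ ∈ Z, then ‖θ₁ − θ₂‖ ≤ (C_c̃/γ)·‖θ₁‖·‖w₁ − w₂‖. -/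
/-- Lipschitz continuity of the advection–diffusion solution with
respect to the advecting velocity field. -/
theorem advection_diffusion_lipschitz_in_velocity
    {H Z : Type*}
    [NormedAddCommGroup H] [InnerProductSpace ℝ H] [CompleteSpace H]
    [NormedAddCommGroup Z] [InnerProductSpace ℝ Z] [CompleteSpace Z]
    (c : Z →L[ℝ] Z →L[ℝ] ℝ)
    (γ : ℝ) (hγ : 0 < γ) (hcoer : ∀ τ : Z, γ * ‖τ‖ ^ 2 ≤ c τ τ)
    (tc : H →L[ℝ] Z →L[ℝ] Z →L[ℝ] ℝ)
    (Ctc : ℝ) (htc : ∀ (w : H) (θ τ : Z), |tc w θ τ| ≤ Ctc * ‖w‖ * ‖θ‖ * ‖τ‖)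
    (F : Z →L[ℝ] ℝ)
    (w₁ w₂ : H) (θ₁ θ₂ : Z)
    (h1 : ∀ τ : Z, c θ₁ τ + tc w₁ θ₁ τ = F τ)
    (h2 : ∀ τ : Z, c θ₂ τ + tc w₂ θ₂ τ = F τ)
    (hpos : ∀ τ : Z, 0 ≤ tc w₂ τ τ) :
    ‖θ₁ - θ₂‖ ≤ (Ctc / γ) * ‖θ₁‖ * ‖w₁ - w₂‖ := by
  set e := θ₁ - θ₂ with he
  have hsub : c θ₁ e + tc w₁ θ₁ e = c θ₂ e + tc w₂ θ₂ e := by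
    rw [h1 e, h2 e]
  have key : c e e + tc w₂ e e = -(tc (w₁ - w₂) θ₁ e) := by
    have : tc (w₁ - w₂) θ₁ e = tc w₁ θ₁ e - tc w₂ θ₁ e := by
      simp [map_sub, ContinuousLinearMap.sub_apply]
    have h2' : c e e = c θ₁ e - c θ₂ e := by
      simp [he, map_sub, ContinuousLinearMap.sub_apply]; ring
    have h3' : tc w₂ e e = tc w₂ θ₁ e - tc w₂ θ₂ e := by
      simp [he, map_sub, ContinuousLinearMap.sub_apply]; ring
    linarith
  have hce : γ * ‖e‖ ^ 2 ≤ |tc (w₁ - w₂) θ₁ e| := by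
    calc γ * ‖e‖ ^ 2 ≤ c e e := hcoer e
    _ ≤ c e e + tc w₂ e e := by linarith [hpos e]
    _ = -(tc (w₁ - w₂) θ₁ e) := key
    _ ≤ |tc (w₁ - w₂) θ₁ e| := neg_le_abs _
  have hbound : γ * ‖e‖ ^ 2 ≤ Ctc * ‖w₁ - w₂‖ * ‖θ₁‖ * ‖e‖ :=
    hce.trans (htc _ _ _)
  rcases eq_or_ne e 0 with h0 | h0
  · rw [h0, norm_zero]
    rcases eq_or_ne θ₁ 0 with ht | ht
    · simp [ht]
    rcases eq_or_ne (w₁ - w₂) 0 with hw | hw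
    · simp [hw]
    have hC : 0 ≤ Ctc := by
      have := (abs_nonneg (tc (w₁ - w₂) θ₁ θ₁)).trans (htc (w₁ - w₂) θ₁ θ₁)
      have hw' : 0 < ‖w₁ - w₂‖ := norm_pos_iff.mpr hw
      have ht' : 0 < ‖θ₁‖ := norm_pos_iff.mpr ht
      nlinarith [mul_pos hw' ht', mul_pos (mul_pos hw' ht') ht']
    positivity
  · have hne : 0 < ‖e‖ := norm_pos_iff.mpr h0
    rw [div_mul_eq_mul_div, div_mul_eq_mul_div, le_div_iff₀ hγ]
    have : γ * ‖e‖ * ‖e‖ ≤ Ctc * ‖θ₁‖ * ‖w₁ - w₂‖ * ‖e‖ := by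
      nlinarith
    nlinarith
end

section
/- Let H̄, Z̄ and M be real Hilbert spaces, H₀ ⊆ H̄ and Z₀ ⊆ Z̄ closed subspaces, U ∈ H̄ and Θ ∈ Z̄. Let a : H̄ × H̄ → ℝ be a bounded bilinear form with constant ‖a‖ such that a(v, v) ≥ α‖v‖² for all v ∈ H₀ (α > 0); let b : H̄ × M → ℝ be a bounded bilinear form such that sup_{0≠v∈H₀} b(v, m)/‖v‖ ≥ β‖m‖ for all m ∈ M (β > 0); let ã : H̄ × H̄ × H̄ → ℝ be a trilinear form bounded with constant C_ã; let c : Z̄ × Z̄ → ℝ be a bounded bilinear form with constant ‖c‖ such that c(τ, τ) ≥ γ‖τ‖² for all τ ∈ Z₀ (γ > 0); let c̃ : H̄ × Z̄ × Z̄ → ℝ be a trilinear form bounded with constant C_c̃; and let g : Z̄ → M' be Lipschitz with constant L_g and satisfy ‖g(ζ)‖_{M'} ≤ g₂ for all ζ ∈ Z̄. Fix R > 0 and assume: (i) c̃(w; τ, τ) ≥ 0 for every w ∈ U + H₀ with ‖w‖ ≤ R and every τ ∈ Z₀; (ii) (1/α)·[C_ã R² + ‖a‖·‖U‖ + ((α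 + ‖a‖)/β)·(g₂ + ‖b(U, ·)‖_{M'})] + ‖U‖ ≤ R; (iii) 2 C_ã R < α; (iv) L_S · L_{S̃} < 1, where L_S := (α + ‖a‖)·L_g/(β(α − 2 C_ã R)) and L_{S̃} := (C_c̃/γ)·(((‖c‖ + C_c̃ R)/γ) + 1)·‖Θ‖. Then there exists a unique triple (u, p, θ) with u ∈ U + H₀, ‖u‖ ≤ R, p ∈ M and θ ∈ Θ + Z₀ such that a(u, v) + ã(u, u, v) + b(v, p) = 0 for all v ∈ H₀, b(u, m) = ⟨g(θ), m⟩ for all m ∈ M, and c(θ, τ) + c̃(u; θ, τ) = 0 for all τ ∈ Z₀. -/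
/-!
The coupled problem is solved by nested contractions on the set `B` of admissible velocities
`u ∈ U + H₀` with `‖u‖ ≤ R`.

For fixed membrane data `f`, freezing the convection at `w ∈ B` leaves an Oseen-type saddle-point
problem, solvable by the Babuška–Brezzi argument: lift `f` through the inf-sup condition, solve on
the kernel of `b` by Lax–Milgram, and recover the multiplier from the inf-sup condition again. Its
stability estimate shows that the solution stays in `B` by (ii) and depends `2 C_ã R / α`-Lipschitz
on `w`, so (iii) yields the Navier–Stokes solution `S_I f`, which is Lipschitz in `f` with constant
`(α + ‖a‖) / (β (α - 2 C_ã R))`.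

For `w ∈ B` the transport form `c + c̃(w)` is coercive on `Z₀` by (i), giving a unique temperature
`S̃ w`, Lipschitz in `w` with constant `L_S̃`. Then `u ↦ S_I (g (S̃ u))` is a contraction of `B`
by (iv), and its fixed point is the unique solution.
-/

open RealInnerProductSpace InnerProductSpace NNReal

theorem mul_le_of_mul_sq_le {κ x D : ℝ} (hx : 0 ≤ x) (hD : 0 ≤ D) (h : κ * x ^ 2 ≤ D * x) :
    κ * x ≤ D := by
  rcases hx.eq_or_lt with rfl | hx
  · simpa using hD
  · nlinarith

theorem Real.toNNReal_mul_toNNReal_lt_one {x y : ℝ} (h : x * y < 1) :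
    x.toNNReal * y.toNNReal < 1 := by
  rcases le_total 0 x with hx | hx
  · rw [← Real.toNNReal_mul hx]
    exact Real.toNNReal_lt_one.2 h
  · simp [Real.toNNReal_of_nonpos hx]

theorem exists_mem_rel_self_of_contracting {X : Type*} [MetricSpace X] [CompleteSpace X]
    {B : Set X} (hB : IsClosed B) (hne : B.Nonempty) {S : X → X → Prop} {k : ℝ≥0} (hk : k < 1)
    (hS : ∀ w ∈ B, ∃ u ∈ B, S w u)
    (hlip : ∀ w₁ ∈ B, ∀ w₂ ∈ B, ∀ u₁ ∈ B, ∀ u₂ ∈ B, S w₁ u₁ → S w₂ u₂ →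
      dist u₁ u₂ ≤ k * dist w₁ w₂) :
    ∃ w ∈ B, S w w := by
  choose! T hTB hTS using hS
  have := hB.completeSpace_coe
  have := hne.to_subtype
  let T' : B → B := fun w => ⟨T w, hTB w w.2⟩
  have hT' : ContractingWith k T' := ⟨hk, LipschitzWith.of_dist_le_mul fun w₁ w₂ =>
    hlip _ w₁.2 _ w₂.2 _ (hTB _ w₁.2) _ (hTB _ w₂.2) (hTS _ w₁.2) (hTS _ w₂.2)⟩
  set w := ContractingWith.fixedPoint T' hT'
  have hw : T w = w := congrArg Subtype.val hT'.fixedPoint_isFixedPt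
  have := hTS w w.2
  rw [hw] at this
  exact ⟨w, w.2, this⟩

theorem existsUnique_coupled_fixedPoint {X Z P : Type*} [MetricSpace X] [CompleteSpace X]
    [MetricSpace Z] [Nonempty Z] {B : Set X} (hB : IsClosed B)
    {transport : X → Z → Prop} {flow : Z → X → P → Prop} {kS kT : ℝ≥0} (hk : kS * kT < 1)
    (transport_exists : ∀ w ∈ B, ∃ θ, transport w θ)
    (transport_lipschitz : ∀ w₁ ∈ B, ∀ w₂ ∈ B, ∀ θ₁ θ₂, transport w₁ θ₁ → transport w₂ θ₂ →
      dist θ₁ θ₂ ≤ kT * dist w₁ w₂)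
    (flow_exists : ∀ θ, ∃ u ∈ B, ∃ p, flow θ u p)
    (flow_lipschitz : ∀ θ₁ θ₂ u₁ u₂ p₁ p₂, u₁ ∈ B → u₂ ∈ B → flow θ₁ u₁ p₁ → flow θ₂ u₂ p₂ →
      dist u₁ u₂ ≤ kS * dist θ₁ θ₂)
    (flow_unique : ∀ θ u p₁ p₂, u ∈ B → flow θ u p₁ → flow θ u p₂ → p₁ = p₂) :
    ∃! x : X × P × Z, x.1 ∈ B ∧ transport x.1 x.2.2 ∧ flow x.2.2 x.1 x.2.1 := by
  have hcomp : ∀ w₁ ∈ B, ∀ w₂ ∈ B, ∀ u₁ ∈ B, ∀ u₂ ∈ B, ∀ θ₁ θ₂ p₁ p₂,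
      transport w₁ θ₁ → transport w₂ θ₂ → flow θ₁ u₁ p₁ → flow θ₂ u₂ p₂ →
      dist u₁ u₂ ≤ (kS * kT : ℝ≥0) * dist w₁ w₂ :=
    fun w₁ hw₁ w₂ hw₂ u₁ hu₁ u₂ hu₂ θ₁ θ₂ p₁ p₂ hθ₁ hθ₂ h₁ h₂ =>
      calc dist u₁ u₂ ≤ kS * dist θ₁ θ₂ := flow_lipschitz _ _ _ _ _ _ hu₁ hu₂ h₁ h₂
        _ ≤ kS * (kT * dist w₁ w₂) :=
          mul_le_mul_of_nonneg_left (transport_lipschitz _ hw₁ _ hw₂ _ _ hθ₁ hθ₂) kS.2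
        _ = (kS * kT : ℝ≥0) * dist w₁ w₂ := by push_cast; ring
  obtain ⟨u₀, hu₀, -⟩ := flow_exists (Classical.arbitrary Z)
  obtain ⟨w, hw, θ, p, hθ, hp⟩ := exists_mem_rel_self_of_contracting hB ⟨u₀, hu₀⟩ hk
    (S := fun w u => ∃ θ p, transport w θ ∧ flow θ u p)
    (fun w hw => by
      obtain ⟨θ, hθ⟩ := transport_exists w hw
      obtain ⟨u, hu, p, hp⟩ := flow_exists θ
      exact ⟨u, hu, θ, p, hθ, hp⟩)
    fun w₁ hw₁ w₂ hw₂ u₁ hu₁ u₂ hu₂ ⟨θ₁, p₁, hθ₁, h₁⟩ ⟨θ₂, p₂, hθ₂, h₂⟩ =>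
      hcomp _ hw₁ _ hw₂ _ hu₁ _ hu₂ _ _ _ _ hθ₁ hθ₂ h₁ h₂
  refine ⟨(w, p, θ), ⟨hw, hθ, hp⟩, fun ⟨w', p', θ'⟩ ⟨hw', hθ', hp'⟩ => ?_⟩
  dsimp only at hw' hθ' hp'
  have hww : w' = w := by
    have := hcomp _ hw' _ hw _ hw' _ hw _ _ _ _ hθ' hθ hp' hp
    have hk' : ((kS * kT : ℝ≥0) : ℝ) < 1 := hk
    exact dist_le_zero.1 (by nlinarith [dist_nonneg (x := w') (y := w)])
  subst hww
  have hθθ : θ' = θ := dist_le_zero.1 <| by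
    simpa using transport_lipschitz _ hw' _ hw' _ _ hθ' hθ
  subst hθθ
  rw [flow_unique _ _ _ _ hw hp' hp]

theorem isCoercive_bilinearComp_subtypeL {E : Type*} [SeminormedAddCommGroup E] [NormedSpace ℝ E]
    {K : Submodule ℝ E} {B : E →L[ℝ] E →L[ℝ] ℝ} {κ : ℝ}
    (hκ : 0 < κ) (hB : ∀ v ∈ K, κ * ‖v‖ ^ 2 ≤ B v v) :
    IsCoercive (B.bilinearComp K.subtypeL K.subtypeL) :=
  ⟨κ, hκ, fun v => by simpa [sq, mul_assoc] using hB v v.2⟩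

theorem isCoercive_bilinearComp_innerSL {M V : Type*} [NormedAddCommGroup M] [NormedSpace ℝ M]
    [NormedAddCommGroup V] [InnerProductSpace ℝ V] {S : M →L[ℝ] V} {β : ℝ} (hβ : 0 < β)
    (hS : ∀ m, β * ‖m‖ ≤ ‖S m‖) : IsCoercive ((innerSL ℝ).bilinearComp S S) := by
  refine ⟨β ^ 2, by positivity, fun m => ?_⟩
  rw [ContinuousLinearMap.bilinearComp_apply, innerSL_apply_apply, real_inner_self_eq_norm_sq]
  have := pow_le_pow_left₀ (by positivity) (hS m) 2
  linarith [mul_pow β ‖m‖ 2]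

section LaxMilgram

variable {E : Type*} [NormedAddCommGroup E] [InnerProductSpace ℝ E] [CompleteSpace E]

theorem IsCoercive.existsUnique_eq {B : E →L[ℝ] E →L[ℝ] ℝ} (hB : IsCoercive B) (f : E →L[ℝ] ℝ) :
    ∃! u, B u = f := by
  set e := hB.continuousLinearEquivOfBilin
  have he : ∀ u v, B u v = ⟪e u, v⟫ := fun u v => (hB.continuousLinearEquivOfBilin_apply u v).symm
  refine ⟨e.symm ((toDual ℝ E).symm f), ?_, fun u hu => e.injective ?_⟩
  · ext v
    rw [he, e.apply_symm_apply, toDual_symm_apply]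
  · refine ext_inner_right ℝ fun v => ?_
    rw [← he, hu, e.apply_symm_apply, toDual_symm_apply]

theorem existsUnique_sub_mem_forall_apply_eq {K : Submodule ℝ E} (hK : IsClosed (K : Set E))
    {B : E →L[ℝ] E →L[ℝ] ℝ} {κ : ℝ} (hκ : 0 < κ) (hB : ∀ v ∈ K, κ * ‖v‖ ^ 2 ≤ B v v)
    (x₀ : E) (f : E →L[ℝ] ℝ) : ∃! x, x - x₀ ∈ K ∧ ∀ v ∈ K, B x v = f v := by
  have := hK.completeSpace_coe
  obtain ⟨z, hz, hz_unique⟩ :=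
    (isCoercive_bilinearComp_subtypeL hκ hB).existsUnique_eq ((f - B x₀).comp K.subtypeL)
  have hz' : ∀ v ∈ K, B z v = f v - B x₀ v := fun v hv => by
    simpa using congr($hz ⟨v, hv⟩)
  refine ⟨x₀ + z, ⟨by simp, fun v hv => ?_⟩, fun x ⟨hx, hxv⟩ => ?_⟩
  · rw [map_add, add_apply, hz' v hv]
    ring
  · have : (⟨x - x₀, hx⟩ : K) = z := hz_unique _ <| by
      ext v
      simp [hxv v v.2]
    rw [← this]
    exact (add_sub_cancel x₀ x).symm

end LaxMilgram

section InfSup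

variable {E M : Type*} [NormedAddCommGroup E] [InnerProductSpace ℝ E]
  [NormedAddCommGroup M] [InnerProductSpace ℝ M] {K : Submodule ℝ E} {b : E →L[ℝ] M →L[ℝ] ℝ} {β : ℝ}

def InfSupCondition (K : Submodule ℝ E) (b : E →L[ℝ] M →L[ℝ] ℝ) (β : ℝ) : Prop :=
  ∀ m : M, β * ‖m‖ ≤ ⨆ v : {v : E // v ∈ K ∧ v ≠ 0}, b v.1 m / ‖v.1‖

theorem InfSupCondition.exists_inner_eq (hb : InfSupCondition K b β) [CompleteSpace K] :
    ∃ S : M →L[ℝ] K, (∀ m (v : K), ⟪S m, v⟫ = b v m) ∧ ∀ m, β * ‖m‖ ≤ ‖S m‖ := by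
  let S : M →L[ℝ] K := ((toDual ℝ K).symm.toContinuousLinearEquiv.toContinuousLinearMap).comp
    (((ContinuousLinearMap.compL ℝ K E ℝ).flip K.subtypeL).comp b.flip)
  have hS : ∀ m (v : K), ⟪S m, v⟫ = b v m := fun m v => toDual_symm_apply
  refine ⟨S, hS, fun m => (hb m).trans (Real.iSup_le (fun ⟨v, hv, hv0⟩ => ?_) (norm_nonneg _))⟩
  rw [div_le_iff₀ (norm_pos_iff.2 hv0), ← hS m ⟨v, hv⟩]
  exact real_inner_le_norm _ _

theorem InfSupCondition.eq_of_forall_apply_eq (hβ : 0 < β) (hb : InfSupCondition K b β) {p₁ p₂ : M}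
    (hp : ∀ v ∈ K, b v p₁ = b v p₂) : p₁ = p₂ := by
  have h := (hb (p₁ - p₂)).trans <| Real.iSup_le (fun v => by simp [hp v.1 v.2.1]) le_rfl
  rw [← sub_eq_zero, ← norm_le_zero_iff]
  exact nonpos_of_mul_nonpos_right h hβ

variable [CompleteSpace E] [CompleteSpace M]

theorem InfSupCondition.exists_mem_apply_eq (hK : IsClosed (K : Set E)) (hβ : 0 < β)
    (hb : InfSupCondition K b β) (f : M →L[ℝ] ℝ) : ∃ v ∈ K, b v = f ∧ β * ‖v‖ ≤ ‖f‖ := by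
  have := hK.completeSpace_coe
  obtain ⟨S, hS, hSβ⟩ := hb.exists_inner_eq
  obtain ⟨m, hm, -⟩ := (isCoercive_bilinearComp_innerSL hβ hSβ).existsUnique_eq f
  have hm' : ∀ n, ⟪S m, S n⟫ = f n := fun n => congr($hm n)
  refine ⟨S m, (S m).2, ?_, ?_⟩
  · ext n
    rw [← hS, real_inner_comm, hm']
  · have hsq : ‖S m‖ ^ 2 = f m := by rw [← real_inner_self_eq_norm_sq, hm']
    have hfm : f m ≤ ‖f‖ * ‖m‖ := (le_abs_self _).trans (f.le_opNorm m)
    refine mul_le_of_mul_sq_le (norm_nonneg _) (norm_nonneg f) ?_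
    calc β * ‖(S m : E)‖ ^ 2 = β * f m := by rw [← hsq]; rfl
      _ ≤ ‖f‖ * (β * ‖m‖) := by nlinarith
      _ ≤ ‖f‖ * ‖(S m : E)‖ := mul_le_mul_of_nonneg_left (hSβ m) (norm_nonneg f)

theorem InfSupCondition.exists_forall_apply_eq (hK : IsClosed (K : Set E)) (hβ : 0 < β)
    (hb : InfSupCondition K b β) (F : E →L[ℝ] ℝ) (hF : ∀ v ∈ K, b v = 0 → F v = 0) :
    ∃ p, ∀ v ∈ K, b v p = F v := by
  have := hK.completeSpace_coe
  obtain ⟨S, hS, hSβ⟩ := hb.exists_inner_eq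
  let y := (toDual ℝ K).symm (F.comp K.subtypeL)
  have hy : ∀ v : K, ⟪y, v⟫ = F v := fun v => toDual_symm_apply
  obtain ⟨p, hp, -⟩ := (isCoercive_bilinearComp_innerSL hβ hSβ).existsUnique_eq
    ((toDual ℝ K y).comp S)
  -- `S p - y` lies in the kernel of `b` and is orthogonal to it, hence vanishes.
  have hx : ∀ m, ⟪S m, S p - y⟫ = 0 := fun m => by
    have h : ⟪S p, S m⟫ = ⟪y, S m⟫ := by simpa using congr($hp m)
    rw [inner_sub_right, real_inner_comm, h, real_inner_comm, sub_self]
  have hxb : b (S p - y : K) = 0 := by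
    ext m
    rw [← hS, hx, zero_apply]
  have hxx : ⟪S p - y, S p - y⟫ = 0 := by
    rw [inner_sub_left, hS, hxb, hy, hF _ (S p - y).2 hxb, zero_apply, sub_zero]
  have hSp : S p = y := sub_eq_zero.1 (inner_self_eq_zero.1 hxx)
  exact ⟨p, fun v hv => by rw [← hS p ⟨v, hv⟩, hSp, hy]⟩

end InfSup

section SaddlePoint

variable {E M : Type*} [NormedAddCommGroup E] [InnerProductSpace ℝ E] [CompleteSpace E]
  [NormedAddCommGroup M] [InnerProductSpace ℝ M] [CompleteSpace M]
  {K : Submodule ℝ E} {a : E →L[ℝ] E →L[ℝ] ℝ} {b : E →L[ℝ] M →L[ℝ] ℝ} {α β : ℝ}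

structure BrezziConditions (K : Submodule ℝ E) (a : E →L[ℝ] E →L[ℝ] ℝ)
    (b : E →L[ℝ] M →L[ℝ] ℝ) (α β : ℝ) : Prop where
  isClosed : IsClosed (K : Set E)
  coercivity_pos : 0 < α
  coercive : ∀ v ∈ K, α * ‖v‖ ^ 2 ≤ a v v
  infSup_pos : 0 < β
  infSup : InfSupCondition K b β

theorem BrezziConditions.exists_solution (h : BrezziConditions K a b α β) (U : E)
    (F : E →L[ℝ] ℝ) (f : M →L[ℝ] ℝ) :
    ∃ u p, u - U ∈ K ∧ (∀ v ∈ K, a u v + b v p = F v) ∧ b u = f := by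
  obtain ⟨w, hwK, hbw, -⟩ := h.infSup.exists_mem_apply_eq h.isClosed h.infSup_pos (f - b U)
  obtain ⟨u, ⟨⟨huK, hub⟩, hu⟩, -⟩ := existsUnique_sub_mem_forall_apply_eq
    (K := K ⊓ LinearMap.ker (b : E →ₗ[ℝ] M →L[ℝ] ℝ)) (h.isClosed.inter b.isClosed_ker)
    h.coercivity_pos (fun v hv => h.coercive v hv.1) (U + w) F
  obtain ⟨p, hp⟩ := h.infSup.exists_forall_apply_eq h.isClosed h.infSup_pos (F - a u)
    fun v hv hbv => by simp [hu v ⟨hv, hbv⟩]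
  refine ⟨u, p, by simpa [sub_add_eq_sub_sub] using K.add_mem huK hwK, fun v hv => ?_, ?_⟩
  · simp [hp v hv]
  · have hub' : b (u - (U + w)) = 0 := hub
    rw [map_sub, map_add, hbw, sub_eq_zero] at hub'
    rw [hub']
    abel

theorem BrezziConditions.mul_norm_le (h : BrezziConditions K a b α β) {δ : E} (hδ : δ ∈ K)
    (q : M) {D : ℝ} (hD : 0 ≤ D) (hδD : ∀ v ∈ K, |a δ v + b v q| ≤ D * ‖v‖) :
    α * ‖δ‖ ≤ D + (α + ‖a‖) / β * ‖b δ‖ := by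
  -- Lift `b δ` to `w ∈ K`; then `δ - w` lies in the kernel of `b`, where `a` is coercive.
  obtain ⟨w, hwK, hbw, hw⟩ := h.infSup.exists_mem_apply_eq h.isClosed h.infSup_pos (b δ)
  have hzK : δ - w ∈ K := K.sub_mem hδ hwK
  have hbz : b (δ - w) = 0 := by rw [map_sub, hbw, sub_self]
  have hz : α * ‖δ - w‖ ≤ D + ‖a‖ * ‖w‖ := by
    refine mul_le_of_mul_sq_le (norm_nonneg _) (by positivity) ?_
    have hazz : a (δ - w) (δ - w) = (a δ (δ - w) + b (δ - w) q) - a w (δ - w) := by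
      simp only [map_sub, sub_apply, hbz, zero_apply]
      ring
    calc α * ‖δ - w‖ ^ 2 ≤ a (δ - w) (δ - w) := h.coercive _ hzK
      _ ≤ D * ‖δ - w‖ + ‖a‖ * ‖w‖ * ‖δ - w‖ := by
        rw [hazz]
        have h₁ := (le_abs_self _).trans (hδD _ hzK)
        have h₂ := (neg_abs_le (a w (δ - w))).trans' (neg_le_neg (a.le_opNorm₂ w (δ - w)))
        linarith
      _ = (D + ‖a‖ * ‖w‖) * ‖δ - w‖ := by ring
  have hw' : (α + ‖a‖) * ‖w‖ ≤ (α + ‖a‖) / β * ‖b δ‖ := by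
    rw [div_mul_eq_mul_div, le_div_iff₀ h.infSup_pos, mul_assoc]
    exact mul_le_mul_of_nonneg_left (by linarith) (by linarith [h.coercivity_pos, norm_nonneg a])
  calc α * ‖δ‖ ≤ α * (‖w‖ + ‖δ - w‖) := by
        gcongr
        · exact h.coercivity_pos.le
        · simpa using norm_add_le w (δ - w)
    _ ≤ D + (α + ‖a‖) / β * ‖b δ‖ := by linarith

end SaddlePoint

section Convection

variable {E : Type*} [SeminormedAddCommGroup E] {C R : ℝ}

-- `C` may be negative when `E` is trivial: `0 ≤ C * ‖x‖` is the sign information that always holds.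
theorem mul_norm_nonneg_of_abs_le {t : E → E → E → ℝ}
    (ht : ∀ x y z, |t x y z| ≤ C * ‖x‖ * ‖y‖ * ‖z‖) (x : E) : 0 ≤ C * ‖x‖ := by
  rcases (norm_nonneg x).eq_or_lt with hx | hx
  · simp [← hx]
  · refine nonneg_of_mul_nonneg_left (b := ‖x‖ ^ 2) ?_ (by positivity)
    linarith [(abs_nonneg _).trans (ht x x x)]

variable [NormedSpace ℝ E] {t : E →L[ℝ] E →L[ℝ] E →L[ℝ] ℝ}

theorem abs_apply_le_of_norm_le (ht : ∀ x y z, |t x y z| ≤ C * ‖x‖ * ‖y‖ * ‖z‖) {w : E}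
    (hw : ‖w‖ ≤ R) (v : E) : |t w w v| ≤ C * R ^ 2 * ‖v‖ := by
  have hR : ‖w‖ ^ 2 ≤ R ^ 2 := pow_le_pow_left₀ (norm_nonneg w) hw 2
  calc |t w w v| ≤ C * ‖v‖ * ‖w‖ ^ 2 := by linarith [ht w w v]
    _ ≤ C * ‖v‖ * R ^ 2 := mul_le_mul_of_nonneg_left hR (mul_norm_nonneg_of_abs_le ht v)
    _ = C * R ^ 2 * ‖v‖ := by ring

theorem abs_apply_sub_apply_le (ht : ∀ x y z, |t x y z| ≤ C * ‖x‖ * ‖y‖ * ‖z‖) {w₁ w₂ : E}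
    (hw₁ : ‖w₁‖ ≤ R) (hw₂ : ‖w₂‖ ≤ R) (v : E) :
    |t w₁ w₁ v - t w₂ w₂ v| ≤ 2 * C * R * ‖w₁ - w₂‖ * ‖v‖ := by
  have hsplit : t w₁ w₁ v - t w₂ w₂ v = t (w₁ - w₂) w₁ v + t w₂ (w₁ - w₂) v := by
    simp only [map_sub, sub_apply]
    ring
  have hCv := mul_norm_nonneg_of_abs_le ht v
  have h₁ := mul_le_mul_of_nonneg_left hw₁ (mul_nonneg hCv (norm_nonneg (w₁ - w₂)))
  have h₂ := mul_le_mul_of_nonneg_left hw₂ (mul_nonneg hCv (norm_nonneg (w₁ - w₂)))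
  calc |t w₁ w₁ v - t w₂ w₂ v| ≤ |t (w₁ - w₂) w₁ v| + |t w₂ (w₁ - w₂) v| := by
        rw [hsplit]; exact abs_add_le _ _
    _ ≤ C * ‖w₁ - w₂‖ * ‖w₁‖ * ‖v‖ + C * ‖w₂‖ * ‖w₁ - w₂‖ * ‖v‖ :=
        add_le_add (ht _ _ _) (ht _ _ _)
    _ ≤ 2 * C * R * ‖w₁ - w₂‖ * ‖v‖ := by linarith

end Convection

theorem isClosed_setOf_sub_mem_and_norm_le {E : Type*} [NormedAddCommGroup E] [NormedSpace ℝ E]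
    {K : Submodule ℝ E} (hK : IsClosed (K : Set E)) (U : E) (R : ℝ) :
    IsClosed {w | w - U ∈ K ∧ ‖w‖ ≤ R} :=
  (hK.preimage (continuous_sub_right U)).inter (isClosed_le continuous_norm continuous_const)

section NavierStokes

variable {E M : Type*} [NormedAddCommGroup E] [InnerProductSpace ℝ E] [CompleteSpace E]
  [NormedAddCommGroup M] [InnerProductSpace ℝ M] [CompleteSpace M]
  {K : Submodule ℝ E} {a : E →L[ℝ] E →L[ℝ] ℝ} {b : E →L[ℝ] M →L[ℝ] ℝ} {α β : ℝ}
  {t : E →L[ℝ] E →L[ℝ] E →L[ℝ] ℝ} {C R : ℝ}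

theorem BrezziConditions.mul_norm_sub_le_of_oseen (h : BrezziConditions K a b α β)
    (ht : ∀ x y z, |t x y z| ≤ C * ‖x‖ * ‖y‖ * ‖z‖) {w₁ w₂ u₁ u₂ : E} {p₁ p₂ : M}
    (hw₁ : ‖w₁‖ ≤ R) (hw₂ : ‖w₂‖ ≤ R) (hu : u₁ - u₂ ∈ K)
    (h₁ : ∀ v ∈ K, a u₁ v + t w₁ w₁ v + b v p₁ = 0)
    (h₂ : ∀ v ∈ K, a u₂ v + t w₂ w₂ v + b v p₂ = 0) :
    α * ‖u₁ - u₂‖ ≤ 2 * C * R * ‖w₁ - w₂‖ + (α + ‖a‖) / β * ‖b u₁ - b u₂‖ := by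
  have hR : 0 ≤ R := (norm_nonneg w₁).trans hw₁
  rw [← map_sub]
  refine h.mul_norm_le hu (p₁ - p₂) ?_ fun v hv => ?_
  · have := mul_norm_nonneg_of_abs_le ht (w₁ - w₂)
    nlinarith
  · have heq : a (u₁ - u₂) v + b v (p₁ - p₂) = -(t w₁ w₁ v - t w₂ w₂ v) := by
      simp only [map_sub, sub_apply]
      linarith [h₁ v hv, h₂ v hv]
    rw [heq, abs_neg]
    exact abs_apply_sub_apply_le ht hw₁ hw₂ v

theorem BrezziConditions.exists_oseen (h : BrezziConditions K a b α β)
    (ht : ∀ x y z, |t x y z| ≤ C * ‖x‖ * ‖y‖ * ‖z‖) {U : E} {g₂ : ℝ} (hR : 0 ≤ R)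
    (hball : (1 / α) * (C * R ^ 2 + ‖a‖ * ‖U‖ + ((α + ‖a‖) / β) * (g₂ + ‖b U‖)) + ‖U‖ ≤ R)
    {w : E} (hw : ‖w‖ ≤ R) {f : M →L[ℝ] ℝ} (hf : ‖f‖ ≤ g₂) :
    ∃ u, (u - U ∈ K ∧ ‖u‖ ≤ R) ∧ ∃ p, (∀ v ∈ K, a u v + t w w v + b v p = 0) ∧ b u = f := by
  obtain ⟨u, p, hu, hup, hbu⟩ := h.exists_solution U (-t w w) f
  refine ⟨u, ⟨hu, ?_⟩, p, fun v hv => by linarith [hup v hv, neg_apply (t w w) v], hbu⟩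
  -- (ii) is only usable once `0 ≤ C`, which a nonzero `u` guarantees.
  rcases eq_or_ne u 0 with rfl | hu0
  · simpa using hR
  have hC : 0 ≤ C :=
    nonneg_of_mul_nonneg_left (mul_norm_nonneg_of_abs_le ht u) (norm_pos_iff.2 hu0)
  have hbound := h.mul_norm_le hu p (D := C * R ^ 2 + ‖a‖ * ‖U‖) (by positivity) fun v hv => by
    have heq : a (u - U) v + b v p = -(t w w v + a U v) := by
      simp only [map_sub, sub_apply]
      linarith [hup v hv, neg_apply (t w w) v]
    rw [heq, abs_neg]
    calc |t w w v + a U v| ≤ |t w w v| + |a U v| := abs_add_le _ _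
      _ ≤ C * R ^ 2 * ‖v‖ + ‖a‖ * ‖U‖ * ‖v‖ :=
        add_le_add (abs_apply_le_of_norm_le ht hw v) (a.le_opNorm₂ U v)
      _ = (C * R ^ 2 + ‖a‖ * ‖U‖) * ‖v‖ := by ring
  have hbuU : ‖b (u - U)‖ ≤ g₂ + ‖b U‖ := by
    rw [map_sub, hbu]
    exact (norm_sub_le _ _).trans (by linarith)
  have hα := h.coercivity_pos
  have hab : 0 ≤ (α + ‖a‖) / β := div_nonneg (by positivity) h.infSup_pos.le
  have : ‖u - U‖ ≤ 1 / α * (C * R ^ 2 + ‖a‖ * ‖U‖ + (α + ‖a‖) / β * (g₂ + ‖b U‖)) := by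
    rw [one_div_mul_eq_div, le_div_iff₀ hα, mul_comm]
    linarith [mul_le_mul_of_nonneg_left hbuU hab]
  linarith [norm_le_norm_add_norm_sub' u U]

theorem BrezziConditions.exists_navierStokes (h : BrezziConditions K a b α β)
    (ht : ∀ x y z, |t x y z| ≤ C * ‖x‖ * ‖y‖ * ‖z‖) {U : E} {g₂ : ℝ} (hR : 0 ≤ R)
    (hball : (1 / α) * (C * R ^ 2 + ‖a‖ * ‖U‖ + ((α + ‖a‖) / β) * (g₂ + ‖b U‖)) + ‖U‖ ≤ R)
    (hcontr : 2 * C * R < α) {f : M →L[ℝ] ℝ} (hf : ‖f‖ ≤ g₂) :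
    ∃ u, (u - U ∈ K ∧ ‖u‖ ≤ R) ∧ ∃ p, (∀ v ∈ K, a u v + t u u v + b v p = 0) ∧ b u = f := by
  have hα := h.coercivity_pos
  obtain ⟨u₀, hu₀, -⟩ := h.exists_oseen ht hR hball (w := 0) (by simpa using hR) hf
  refine exists_mem_rel_self_of_contracting (isClosed_setOf_sub_mem_and_norm_le h.isClosed U R)
    ⟨u₀, hu₀⟩ (k := (2 * C * R / α).toNNReal) (by rwa [Real.toNNReal_lt_one, div_lt_one hα])
    (fun w hw => h.exists_oseen ht hR hball hw.2 hf)
    fun w₁ hw₁ w₂ hw₂ u₁ hu₁ u₂ hu₂ ⟨p₁, h₁, hb₁⟩ ⟨p₂, h₂, hb₂⟩ => ?_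
  have hu : u₁ - u₂ ∈ K := by simpa using K.sub_mem hu₁.1 hu₂.1
  have := h.mul_norm_sub_le_of_oseen ht hw₁.2 hw₂.2 hu h₁ h₂
  rw [hb₁, hb₂, sub_self, norm_zero, mul_zero, add_zero] at this
  rw [dist_eq_norm, dist_eq_norm]
  calc ‖u₁ - u₂‖ ≤ 2 * C * R / α * ‖w₁ - w₂‖ := by
        rw [div_mul_eq_mul_div, le_div_iff₀ hα]
        linarith
    _ ≤ _ := mul_le_mul_of_nonneg_right (Real.le_coe_toNNReal _) (norm_nonneg _)

theorem BrezziConditions.norm_sub_le_of_navierStokes {Z : Type*} [SeminormedAddCommGroup Z]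
    (h : BrezziConditions K a b α β) (ht : ∀ x y z, |t x y z| ≤ C * ‖x‖ * ‖y‖ * ‖z‖)
    (hcontr : 2 * C * R < α) {g : Z → M →L[ℝ] ℝ} {Lg : ℝ}
    (hg : ∀ ζ₁ ζ₂, ‖g ζ₁ - g ζ₂‖ ≤ Lg * ‖ζ₁ - ζ₂‖) {u₁ u₂ : E} {p₁ p₂ : M} {θ₁ θ₂ : Z}
    (hu₁ : ‖u₁‖ ≤ R) (hu₂ : ‖u₂‖ ≤ R) (hu : u₁ - u₂ ∈ K)
    (h₁ : ∀ v ∈ K, a u₁ v + t u₁ u₁ v + b v p₁ = 0)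
    (h₂ : ∀ v ∈ K, a u₂ v + t u₂ u₂ v + b v p₂ = 0)
    (hb₁ : b u₁ = g θ₁) (hb₂ : b u₂ = g θ₂) :
    ‖u₁ - u₂‖ ≤ (α + ‖a‖) * Lg / (β * (α - 2 * C * R)) * ‖θ₁ - θ₂‖ := by
  have hstab := h.mul_norm_sub_le_of_oseen ht hu₁ hu₂ hu h₁ h₂
  rw [hb₁, hb₂] at hstab
  have hab : 0 ≤ (α + ‖a‖) / β :=
    div_nonneg (by linarith [h.coercivity_pos, norm_nonneg a]) h.infSup_pos.le
  have hgap : 0 < α - 2 * C * R := by linarith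
  rw [mul_div_right_comm, ← div_div, div_mul_eq_mul_div, div_mul_eq_mul_div, le_div_iff₀ hgap,
    mul_comm]
  nlinarith [mul_le_mul_of_nonneg_left (hg θ₁ θ₂) hab]

end NavierStokes

section Transport

variable {W Z : Type*} [SeminormedAddCommGroup W] [NormedSpace ℝ W]
  [NormedAddCommGroup Z] [InnerProductSpace ℝ Z]
  {Z₀ : Submodule ℝ Z} {c : Z →L[ℝ] Z →L[ℝ] ℝ} {γ : ℝ} {t : W →L[ℝ] Z →L[ℝ] Z →L[ℝ] ℝ}
  {C R : ℝ} {Θ : Z}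

theorem existsUnique_transport [CompleteSpace Z] (hZ₀ : IsClosed (Z₀ : Set Z)) (hγ : 0 < γ)
    (hc : ∀ τ ∈ Z₀, γ * ‖τ‖ ^ 2 ≤ c τ τ) {w : W} (hw : ∀ τ ∈ Z₀, 0 ≤ t w τ τ) (Θ : Z) :
    ∃! θ, θ - Θ ∈ Z₀ ∧ ∀ τ ∈ Z₀, c θ τ + t w θ τ = 0 :=
  existsUnique_sub_mem_forall_apply_eq hZ₀ (B := c + t w) hγ
    (fun τ hτ => by simpa using add_le_add (hc τ hτ) (hw τ hτ)) Θ 0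

theorem mul_norm_sub_le_of_transport (hc : ∀ τ ∈ Z₀, γ * ‖τ‖ ^ 2 ≤ c τ τ)
    (ht : ∀ w θ τ, |t w θ τ| ≤ C * ‖w‖ * ‖θ‖ * ‖τ‖) (hC : 0 ≤ C) {w : W} (hwR : ‖w‖ ≤ R)
    (hw : ∀ τ ∈ Z₀, 0 ≤ t w τ τ) {θ : Z} (hθ : θ - Θ ∈ Z₀)
    (heq : ∀ τ ∈ Z₀, c θ τ + t w θ τ = 0) :
    γ * ‖θ - Θ‖ ≤ (‖c‖ + C * R) * ‖Θ‖ := by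
  have hR : 0 ≤ R := (norm_nonneg w).trans hwR
  refine mul_le_of_mul_sq_le (norm_nonneg _) (by positivity) ?_
  have hsplit : c (θ - Θ) (θ - Θ) + t w (θ - Θ) (θ - Θ) = -(c Θ (θ - Θ) + t w Θ (θ - Θ)) := by
    have := heq _ hθ
    simp only [map_sub, sub_apply] at this ⊢
    linarith
  have htΘ : |t w Θ (θ - Θ)| ≤ C * R * ‖Θ‖ * ‖θ - Θ‖ := by
    have := mul_le_mul_of_nonneg_right hwR (by positivity : 0 ≤ C * ‖Θ‖ * ‖θ - Θ‖)
    linarith [ht w Θ (θ - Θ)]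
  have hcΘ : |c Θ (θ - Θ)| ≤ ‖c‖ * ‖Θ‖ * ‖θ - Θ‖ := c.le_opNorm₂ Θ (θ - Θ)
  linarith [hc _ hθ, hw _ hθ, neg_abs_le (c Θ (θ - Θ)), neg_abs_le (t w Θ (θ - Θ))]

theorem norm_sub_le_of_transport (hγ : 0 < γ) (hc : ∀ τ ∈ Z₀, γ * ‖τ‖ ^ 2 ≤ c τ τ)
    (ht : ∀ w θ τ, |t w θ τ| ≤ C * ‖w‖ * ‖θ‖ * ‖τ‖) {w₁ w₂ : W} (hw₂R : ‖w₂‖ ≤ R)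
    (hw₁ : ∀ τ ∈ Z₀, 0 ≤ t w₁ τ τ) (hw₂ : ∀ τ ∈ Z₀, 0 ≤ t w₂ τ τ) {θ₁ θ₂ : Z}
    (hθ₁ : θ₁ - Θ ∈ Z₀) (heq₁ : ∀ τ ∈ Z₀, c θ₁ τ + t w₁ θ₁ τ = 0)
    (hθ₂ : θ₂ - Θ ∈ Z₀) (heq₂ : ∀ τ ∈ Z₀, c θ₂ τ + t w₂ θ₂ τ = 0) :
    ‖θ₁ - θ₂‖ ≤ ((C / γ) * (((‖c‖ + C * R) / γ) + 1) * ‖Θ‖).toNNReal * ‖w₁ - w₂‖ := by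
  have hδ : θ₁ - θ₂ ∈ Z₀ := by simpa using Z₀.sub_mem hθ₁ hθ₂
  have henergy : γ * ‖θ₁ - θ₂‖ ^ 2 ≤ C * (‖w₁ - w₂‖ * ‖θ₂‖ * ‖θ₁ - θ₂‖) := by
    have hsplit : c (θ₁ - θ₂) (θ₁ - θ₂) + t w₁ (θ₁ - θ₂) (θ₁ - θ₂) =
        -t (w₁ - w₂) θ₂ (θ₁ - θ₂) := by
      have h₁ := heq₁ _ hδ
      have h₂ := heq₂ _ hδ
      simp only [map_sub, sub_apply] at h₁ h₂ ⊢
      linarith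
    linarith [hc _ hδ, hw₁ _ hδ, neg_abs_le (t (w₁ - w₂) θ₂ (θ₁ - θ₂)),
      ht (w₁ - w₂) θ₂ (θ₁ - θ₂)]
  rcases (norm_nonneg (θ₁ - θ₂)).eq_or_lt with hδ0 | hδ0
  · rw [← hδ0]
    positivity
  -- A nonzero difference forces the transport form to be nonzero, hence `0 ≤ C`.
  have hC : 0 ≤ C := (pos_of_mul_pos_left (henergy.trans_lt' (by positivity)) (by positivity)).le
  have hθ₂ : ‖θ₂‖ ≤ ((‖c‖ + C * R) / γ + 1) * ‖Θ‖ := by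
    have := mul_norm_sub_le_of_transport hc ht hC hw₂R hw₂ hθ₂ heq₂
    have : ‖θ₂ - Θ‖ ≤ (‖c‖ + C * R) / γ * ‖Θ‖ := by
      rw [div_mul_eq_mul_div, le_div_iff₀ hγ]
      linarith
    linarith [norm_le_norm_add_norm_sub' θ₂ Θ]
  have h₁ : γ * ‖θ₁ - θ₂‖ ≤ C * ‖w₁ - w₂‖ * ‖θ₂‖ :=
    mul_le_of_mul_sq_le hδ0.le (by positivity) (by linarith)
  have h₂ := mul_le_mul_of_nonneg_left hθ₂ (by positivity : 0 ≤ C * ‖w₁ - w₂‖)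
  refine le_trans ?_ (mul_le_mul_of_nonneg_right (Real.le_coe_toNNReal _) (norm_nonneg _))
  rw [show C / γ * ((‖c‖ + C * R) / γ + 1) * ‖Θ‖ * ‖w₁ - w₂‖ =
    C * ‖w₁ - w₂‖ * (((‖c‖ + C * R) / γ + 1) * ‖Θ‖) / γ by ring, le_div_iff₀ hγ]
  linarith

end Transport

/-- existence and uniqueness of a weak solution to the coupled
flow–transport problem with membrane condition `b(u,·) = g(θ)`, obtained by the
Banach fixed-point theorem (abstract form of Section 3.3 of the paper). -/
theorem coupled_flow_transport_existence_uniqueness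
    {Hb Zb M : Type*}
    [NormedAddCommGroup Hb] [InnerProductSpace ℝ Hb] [CompleteSpace Hb]
    [NormedAddCommGroup Zb] [InnerProductSpace ℝ Zb] [CompleteSpace Zb]
    [NormedAddCommGroup M] [InnerProductSpace ℝ M] [CompleteSpace M]
    (H₀ : Submodule ℝ Hb) (hH₀ : IsClosed (H₀ : Set Hb))
    (Z₀ : Submodule ℝ Zb) (hZ₀ : IsClosed (Z₀ : Set Zb))
    (U : Hb) (Θ : Zb)
    (a : Hb →L[ℝ] Hb →L[ℝ] ℝ)
    (α : ℝ) (hα : 0 < α) (hacoer : ∀ v ∈ H₀, α * ‖v‖ ^ 2 ≤ a v v)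
    (b : Hb →L[ℝ] M →L[ℝ] ℝ)
    (β : ℝ) (hβ : 0 < β)
    (hinfsup : ∀ m : M,
      β * ‖m‖ ≤ ⨆ v : {v : Hb // v ∈ H₀ ∧ v ≠ 0}, b v.1 m / ‖v.1‖)
    (ta : Hb →L[ℝ] Hb →L[ℝ] Hb →L[ℝ] ℝ)
    (Cta : ℝ) (hta : ∀ w u v : Hb, |ta w u v| ≤ Cta * ‖w‖ * ‖u‖ * ‖v‖)
    (c : Zb →L[ℝ] Zb →L[ℝ] ℝ)
    (γ : ℝ) (hγ : 0 < γ) (hccoer : ∀ τ ∈ Z₀, γ * ‖τ‖ ^ 2 ≤ c τ τ)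
    (tc : Hb →L[ℝ] Zb →L[ℝ] Zb →L[ℝ] ℝ)
    (Ctc : ℝ) (htc : ∀ (w : Hb) (θ τ : Zb), |tc w θ τ| ≤ Ctc * ‖w‖ * ‖θ‖ * ‖τ‖)
    (g : Zb → M →L[ℝ] ℝ)
    (Lg g₂ : ℝ)
    (hgLip : ∀ ζ₁ ζ₂ : Zb, ‖g ζ₁ - g ζ₂‖ ≤ Lg * ‖ζ₁ - ζ₂‖)
    (hgbdd : ∀ ζ : Zb, ‖g ζ‖ ≤ g₂)
    (R : ℝ) (hR : 0 < R)
    -- (i) nonnegativity of the convective transport form along admissible velocities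
    (hpos : ∀ w : Hb, w - U ∈ H₀ → ‖w‖ ≤ R → ∀ τ ∈ Z₀, 0 ≤ tc w τ τ)
    -- (ii) ball invariance smallness condition
    (hball :
      (1 / α) * (Cta * R ^ 2 + ‖a‖ * ‖U‖ + ((α + ‖a‖) / β) * (g₂ + ‖b U‖)) + ‖U‖ ≤ R)
    -- (iii) contraction condition for the Navier–Stokes fixed point
    (hcontr : 2 * Cta * R < α)
    -- (iv) contraction condition for the coupled fixed point: L_S · L_S̃ < 1
    (hLT :
      ((α + ‖a‖) * Lg / (β * (α - 2 * Cta * R))) *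
        ((Ctc / γ) * (((‖c‖ + Ctc * R) / γ) + 1) * ‖Θ‖) < 1) :
    ∃! sol : Hb × M × Zb,
      sol.1 - U ∈ H₀ ∧ ‖sol.1‖ ≤ R ∧ sol.2.2 - Θ ∈ Z₀ ∧
      (∀ v ∈ H₀, a sol.1 v + ta sol.1 sol.1 v + b v sol.2.1 = 0) ∧
      (∀ m : M, b sol.1 m = g sol.2.2 m) ∧
      (∀ τ ∈ Z₀, c sol.2.2 τ + tc sol.1 sol.2.2 τ = 0) := by
  have hS : BrezziConditions H₀ a b α β := ⟨hH₀, hα, hacoer, hβ, hinfsup⟩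
  refine (existsUnique_congr fun x => ?_).1 <| existsUnique_coupled_fixedPoint
    (isClosed_setOf_sub_mem_and_norm_le hH₀ U R) (Real.toNNReal_mul_toNNReal_lt_one hLT)
    (transport := fun w θ => θ - Θ ∈ Z₀ ∧ ∀ τ ∈ Z₀, c θ τ + tc w θ τ = 0)
    (flow := fun θ u p => (∀ v ∈ H₀, a u v + ta u u v + b v p = 0) ∧ b u = g θ)
    (fun w hw => (existsUnique_transport hZ₀ hγ hccoer (hpos w hw.1 hw.2) Θ).exists)
    (fun w₁ hw₁ w₂ hw₂ θ₁ θ₂ h₁ h₂ => by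
      simpa only [dist_eq_norm] using norm_sub_le_of_transport hγ hccoer htc hw₂.2
        (hpos _ hw₁.1 hw₁.2) (hpos _ hw₂.1 hw₂.2) h₁.1 h₁.2 h₂.1 h₂.2)
    (fun θ => hS.exists_navierStokes hta hR.le hball hcontr (hgbdd θ))
    (fun θ₁ θ₂ u₁ u₂ p₁ p₂ hu₁ hu₂ h₁ h₂ => by
      rw [dist_eq_norm, dist_eq_norm]
      refine (hS.norm_sub_le_of_navierStokes hta hcontr hgLip hu₁.2 hu₂.2
        (by simpa using H₀.sub_mem hu₁.1 hu₂.1) h₁.1 h₂.1 h₁.2 h₂.2).trans ?_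
      exact mul_le_mul_of_nonneg_right (Real.le_coe_toNNReal _) (norm_nonneg _))
    (fun θ u p₁ p₂ _ h₁ h₂ => hS.infSup.eq_of_forall_apply_eq hβ fun v hv => by
      linarith [h₁.1 v hv, h₂.1 v hv])
  simp only [Set.mem_ofPred_eq, ContinuousLinearMap.ext_iff]
  tauto
end

section
/- Let V, Q, Z, W be real Hilbert spaces. Let a : V × V → ℝ be a bounded bilinear form with constant ‖a‖ that is coercive with constant α_a > 0, let c : Z × Z → ℝ be a bounded bilinear form coercive with constant α_c > 0, and let b : V × (Q × W) → ℝ be a bounded bilinear form satisfying sup_{0≠v∈V} b(v,(q,ξ))/‖v‖ ≥ β(‖q‖² + ‖ξ‖²)^{1/2} for all (q,ξ) ∈ Q × W, with β > 0. For four-tuples define |||(v,q,τ,ξ)|||² := ‖v‖² + ‖q‖² + ‖τ‖² + ‖ξ‖² and B((u,p,θ,λ),(v,q,τ,ξ)) := a(u,v) + b(v,(p,λ)) + b(u,(q,ξ)) + c(θ,τ). Then there exist constants γ > 0 and C₀ > 0, depending only on α_a, α_c, β, ‖a‖ and the boundedness constant of b, such that for every (u,p,θ,λ) ∈ V × Q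 × Z × W there exists (v,q,τ,ξ) ∈ V × Q × Z × W with |||(v,q,τ,ξ)||| ≤ C₀·|||(u,p,θ,λ)||| and B((u,p,θ,λ),(v,q,τ,ξ)) ≥ γ·|||(u,p,θ,λ)|||². -/
set_option maxHeartbeats 1000000


/-- abstract global inf-sup/stability for the linear part of the
divergence-conforming discretisation (Lemma 5.4 of the paper). -/
theorem global_infsup_linear_part
    {V Q Z W : Type*}
    [NormedAddCommGroup V] [InnerProductSpace ℝ V] [CompleteSpace V]
    [NormedAddCommGroup Q] [InnerProductSpace ℝ Q] [CompleteSpace Q]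
    [NormedAddCommGroup Z] [InnerProductSpace ℝ Z] [CompleteSpace Z]
    [NormedAddCommGroup W] [InnerProductSpace ℝ W] [CompleteSpace W]
    (a : V →L[ℝ] V →L[ℝ] ℝ)
    (αa : ℝ) (hαa : 0 < αa) (hacoer : ∀ v : V, αa * ‖v‖ ^ 2 ≤ a v v)
    (c : Z →L[ℝ] Z →L[ℝ] ℝ)
    (αc : ℝ) (hαc : 0 < αc) (hccoer : ∀ τ : Z, αc * ‖τ‖ ^ 2 ≤ c τ τ)
    (b : V →L[ℝ] (Q × W) →L[ℝ] ℝ)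
    (β : ℝ) (hβ : 0 < β)
    (hinfsup : ∀ (q : Q) (ξ : W),
      β * Real.sqrt (‖q‖ ^ 2 + ‖ξ‖ ^ 2) ≤
        ⨆ v : {v : V // v ≠ 0}, b v.1 (q, ξ) / ‖v.1‖) :
    ∃ γ : ℝ, 0 < γ ∧ ∃ C₀ : ℝ, 0 < C₀ ∧
      ∀ (u : V) (p : Q) (θ : Z) (lam : W),
        ∃ (v : V) (q : Q) (τ : Z) (ξ : W),
          Real.sqrt (‖v‖ ^ 2 + ‖q‖ ^ 2 + ‖τ‖ ^ 2 + ‖ξ‖ ^ 2) ≤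
            C₀ * Real.sqrt (‖u‖ ^ 2 + ‖p‖ ^ 2 + ‖θ‖ ^ 2 + ‖lam‖ ^ 2) ∧
          γ * (‖u‖ ^ 2 + ‖p‖ ^ 2 + ‖θ‖ ^ 2 + ‖lam‖ ^ 2) ≤
            a u v + b v (p, lam) + b u (q, ξ) + c θ τ := by
  set Ca : ℝ := ‖a‖ + 1 with hCa_def
  have hCa : 0 < Ca := by positivity
  have hCa1 : 1 ≤ Ca := by
    have := norm_nonneg a; simp [hCa_def]; linarith
  set δ : ℝ := αa * β / (2 * Ca ^ 2) with hδ_def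
  have hδ : 0 < δ := by
    apply div_pos (mul_pos hαa hβ); positivity
  have hδCa : 2 * δ * Ca ^ 2 = αa * β := by
    rw [hδ_def]; field_simp
  set γ : ℝ := min (αa / 2) (min αc (δ * β / 4)) with hγ_def
  have hγ : 0 < γ := lt_min (by linarith) (lt_min hαc (by positivity))
  have hγa : γ ≤ αa / 2 := min_le_left _ _
  have hγc : γ ≤ αc := le_trans (min_le_right _ _) (min_le_left _ _)
  have hγb : γ ≤ δ * β / 4 := le_trans (min_le_right _ _) (min_le_right _ _)
  set C₀ : ℝ := Real.sqrt (3 + 2 * δ ^ 2) with hC₀_def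
  have hC₀1 : 1 ≤ C₀ := by
    rw [hC₀_def, show (1:ℝ) = Real.sqrt 1 from Real.sqrt_one.symm]
    exact Real.sqrt_le_sqrt (by nlinarith [sq_nonneg δ])
  clear_value C₀ γ δ Ca
  refine ⟨γ, hγ, C₀, by linarith, fun u p θ lam => ?_⟩
  rcases eq_or_lt_of_le (by positivity : (0:ℝ) ≤ ‖p‖ ^ 2 + ‖lam‖ ^ 2) with h0 | hpos
  · -- p = 0 and lam = 0
    have hp : p = 0 := by
      have : ‖p‖ ^ 2 = 0 := by nlinarith [sq_nonneg ‖p‖, sq_nonneg ‖lam‖]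
      simpa using (pow_eq_zero_iff (n := 2) (by norm_num)).mp this
    have hl : lam = 0 := by
      have : ‖lam‖ ^ 2 = 0 := by nlinarith [sq_nonneg ‖p‖, sq_nonneg ‖lam‖]
      simpa using (pow_eq_zero_iff (n := 2) (by norm_num)).mp this
    subst hp; subst hl
    refine ⟨u, 0, θ, 0, ?_, ?_⟩
    · simpa using le_mul_of_one_le_left (Real.sqrt_nonneg _) hC₀1
    · have h1 := hacoer u
      have h2 := hccoer θ
      have hb0 : (b u) ((0:Q), (0:W)) = 0 := by
        rw [show ((0:Q), (0:W)) = (0 : Q × W) from rfl, map_zero]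
      rw [hb0]
      simp only [norm_zero]
      have hu2 : (0:ℝ) ≤ ‖u‖ ^ 2 := by positivity
      have hθ2 : (0:ℝ) ≤ ‖θ‖ ^ 2 := by positivity
      nlinarith
  · -- nontrivial (p, lam)
    set S : ℝ := Real.sqrt (‖p‖ ^ 2 + ‖lam‖ ^ 2) with hS_def
    have hS : 0 < S := Real.sqrt_pos.mpr hpos
    have hS2 : S ^ 2 = ‖p‖ ^ 2 + ‖lam‖ ^ 2 := Real.sq_sqrt (le_of_lt hpos)
    have hsup := hinfsup p lam
    haveI hne : Nonempty {v : V // v ≠ 0} := by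
      by_contra h
      rw [not_nonempty_iff] at h
      have h0 : (⨆ v : {v : V // v ≠ 0}, b v.1 (p, lam) / ‖v.1‖) = 0 :=
        Real.iSup_of_isEmpty _
      rw [h0] at hsup
      nlinarith
    obtain ⟨v₀, hv₀⟩ := exists_lt_of_lt_ciSup
      (show β * S / 2 < ⨆ v : {v : V // v ≠ 0}, b v.1 (p, lam) / ‖v.1‖ by
        refine lt_of_lt_of_le ?_ hsup; nlinarith)
    have hv0 : 0 < ‖v₀.1‖ := norm_pos_iff.mpr v₀.2
    have hbv : β * S / 2 * ‖v₀.1‖ < b v₀.1 (p, lam) := (lt_div_iff₀ hv0).mp hv₀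
    set w : V := (S / ‖v₀.1‖) • v₀.1 with hw_def
    have hwS : ‖w‖ = S := by
      rw [hw_def, norm_smul, Real.norm_eq_abs, abs_of_nonneg (by positivity)]
      field_simp
    have hbw : β * S ^ 2 / 2 ≤ b w (p, lam) := by
      have heq : b w (p, lam) = (S / ‖v₀.1‖) * b v₀.1 (p, lam) := by
        rw [hw_def, map_smul]; simp
      rw [heq]
      have h1 : β * S ^ 2 / 2 = (S / ‖v₀.1‖) * (β * S / 2 * ‖v₀.1‖) := by
        field_simp
      rw [h1]
      exact mul_le_mul_of_nonneg_left (le_of_lt hbv) (by positivity)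
    clear_value w S
    refine ⟨u + δ • w, -p, θ, -lam, ?_, ?_⟩
    · -- norm bound
      have hvle : ‖u + δ • w‖ ≤ ‖u‖ + δ * S := by
        calc ‖u + δ • w‖ ≤ ‖u‖ + ‖δ • w‖ := norm_add_le _ _
          _ = ‖u‖ + δ * S := by
              rw [norm_smul, Real.norm_eq_abs, abs_of_nonneg hδ.le, hwS]
      have hv2 : ‖u + δ • w‖ ^ 2 ≤ 2 * ‖u‖ ^ 2 + 2 * δ ^ 2 * S ^ 2 := by
        nlinarith [norm_nonneg (u + δ • w), norm_nonneg u, sq_nonneg (‖u‖ - δ * S)]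
      have hinner : ‖u + δ • w‖ ^ 2 + ‖(-p : Q)‖ ^ 2 + ‖θ‖ ^ 2 + ‖(-lam : W)‖ ^ 2 ≤
          (3 + 2 * δ ^ 2) * (‖u‖ ^ 2 + ‖p‖ ^ 2 + ‖θ‖ ^ 2 + ‖lam‖ ^ 2) := by
        rw [norm_neg, norm_neg]
        nlinarith [sq_nonneg ‖u‖, sq_nonneg ‖θ‖, sq_nonneg δ, hS2,
          sq_nonneg ‖p‖, sq_nonneg ‖lam‖]
      calc Real.sqrt (‖u + δ • w‖ ^ 2 + ‖(-p : Q)‖ ^ 2 + ‖θ‖ ^ 2 + ‖(-lam : W)‖ ^ 2)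
          ≤ Real.sqrt ((3 + 2 * δ ^ 2) * (‖u‖ ^ 2 + ‖p‖ ^ 2 + ‖θ‖ ^ 2 + ‖lam‖ ^ 2)) :=
            Real.sqrt_le_sqrt hinner
        _ = C₀ * Real.sqrt (‖u‖ ^ 2 + ‖p‖ ^ 2 + ‖θ‖ ^ 2 + ‖lam‖ ^ 2) := by
            rw [hC₀_def, Real.sqrt_mul (by positivity)]
    · -- coercivity bound
      have hBeq : a u (u + δ • w) + b (u + δ • w) (p, lam) + b u (-p, -lam) + c θ θ =
          a u u + δ * a u w + δ * b w (p, lam) + c θ θ := by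
        have hneg : ((-p : Q), (-lam : W)) = -((p, lam) : Q × W) := rfl
        rw [hneg, map_neg, map_add, map_smul]
        simp only [map_add, map_smul, ContinuousLinearMap.add_apply,
          ContinuousLinearMap.smul_apply, smul_eq_mul]
        ring
      rw [hBeq]
      have hau := hacoer u
      have hcθ := hccoer θ
      have hauw : -(Ca * ‖u‖ * S) ≤ a u w := by
        have h1 : ‖a u w‖ ≤ ‖a‖ * ‖u‖ * ‖w‖ := a.le_opNorm₂ u w
        rw [Real.norm_eq_abs] at h1
        have h2 := abs_le.mp h1
        have h3 : ‖a‖ * ‖u‖ * ‖w‖ ≤ Ca * ‖u‖ * S := by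
          rw [hwS]
          have : ‖a‖ ≤ Ca := by simp [hCa_def]
          exact mul_le_mul_of_nonneg_right
            (mul_le_mul_of_nonneg_right this (norm_nonneg u)) hS.le
        linarith [h2.1]
      -- Young: δ * Ca * ‖u‖ * S ≤ (αa/2) * ‖u‖^2 + (δ*β/4) * S^2
      have hyoung : δ * (Ca * ‖u‖ * S) ≤ αa / 2 * ‖u‖ ^ 2 + δ * β / 4 * S ^ 2 := by
        have key : β * (Ca * ‖u‖) * S ≤ (Ca * ‖u‖) ^ 2 + β ^ 2 * S ^ 2 / 4 := by
          nlinarith [sq_nonneg (Ca * ‖u‖ - β * S / 2)]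
        have h4 : δ * (β * (Ca * ‖u‖) * S) ≤ δ * ((Ca * ‖u‖) ^ 2 + β ^ 2 * S ^ 2 / 4) :=
          mul_le_mul_of_nonneg_left key hδ.le
        have h5 : δ * (Ca * ‖u‖) ^ 2 = αa / 2 * ‖u‖ ^ 2 * β := by
          linear_combination (‖u‖ ^ 2 / 2) * hδCa
        have h6 : β * (δ * (Ca * ‖u‖ * S)) ≤
            β * (αa / 2 * ‖u‖ ^ 2 + δ * β / 4 * S ^ 2) := by
          calc β * (δ * (Ca * ‖u‖ * S)) = δ * (β * (Ca * ‖u‖) * S) := by ring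
            _ ≤ δ * ((Ca * ‖u‖) ^ 2 + β ^ 2 * S ^ 2 / 4) := h4
            _ = β * (αa / 2 * ‖u‖ ^ 2 + δ * β / 4 * S ^ 2) := by
                linear_combination h5
        exact le_of_mul_le_mul_left h6 hβ
      have hfinal : γ * (‖u‖ ^ 2 + ‖p‖ ^ 2 + ‖θ‖ ^ 2 + ‖lam‖ ^ 2) ≤
          αa / 2 * ‖u‖ ^ 2 + αc * ‖θ‖ ^ 2 + δ * β / 4 * S ^ 2 := by
        rw [hS2]
        nlinarith [sq_nonneg ‖u‖, sq_nonneg ‖θ‖, sq_nonneg ‖p‖, sq_nonneg ‖lam‖,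
          hγa, hγc, hγb]
      have hδauw : δ * (-(Ca * ‖u‖ * S)) ≤ δ * a u w :=
        mul_le_mul_of_nonneg_left hauw hδ.le
      have hδbw : δ * (β * S ^ 2 / 2) ≤ δ * b w (p, lam) :=
        mul_le_mul_of_nonneg_left hbw hδ.le
      linarith [hfinal, hau, hcθ, hδauw, hδbw, hyoung]
end
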